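/- Let A = {1,…,3p}, A_1,…,A_n be 3-element subsets of A, y_i the characteristic vector of A_i, and y_{n+1} = (−1,…,−1). If C ⊆ {y_1,…,y_{n+1}} is nonempty and ∑_{y∈C} y = 0, then y_{n+1} ∈ C and the sets A_i with y_i ∈ C form an exact cover of A by p sets. -/

import Mathlib

/-!
Read coordinatewise, `∑_{y ∈ C} y = 0` says that every point `j` lies in exactly
`[y_{n+1} ∈ C]` of the chosen sets. If `y_{n+1} ∉ C`, no point is covered, which is absurd
since `C` contains some `y_i` and `A_i` is nonempty. Hence every point is covered exactly once,
so the chosen sets form an exact cover, and counting points shows that there are `p` of them.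
-/

open Finset

theorem Fin.sum_finset_eq_sum_castSucc_add {M : Type*} [AddCommMonoid M] {n : ℕ}
    (C : Finset (Fin (n + 1))) (f : Fin (n + 1) → M) :
    ∑ i ∈ C, f i =
      ∑ i ∈ univ.filter (fun i : Fin n => i.castSucc ∈ C), f i.castSucc +
        if Fin.last n ∈ C then f (Fin.last n) else 0 := by
  rw [sum_filter, ← Fin.sum_univ_castSucc (fun i => if i ∈ C then f i else 0), sum_ite_mem,
    univ_inter]

theorem exact_cover_of_card_filter_mem_eq_one {ι α : Type*} [DecidableEq α] [Fintype α]
    {A : ι → Finset α} {S : Finset ι} (h : ∀ a, (S.filter (fun i => a ∈ A i)).card = 1) :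
    (S : Set ι).PairwiseDisjoint A ∧ S.biUnion A = univ := by
  refine ⟨fun i hi i' hi' hne => disjoint_left.2 fun a ha ha' => hne ?_, ?_⟩
  · exact card_le_one.1 (h a).le i (by simp_all) i' (by simp_all)
  · refine eq_univ_of_forall fun a => ?_
    obtain ⟨i, hi⟩ := card_pos.1 ((h a).symm ▸ Nat.one_pos)
    exact mem_biUnion.2 ⟨i, (mem_filter.1 hi).1, (mem_filter.1 hi).2⟩

theorem stmt_5 (p n : ℕ) (A : Fin n → Finset (Fin (3 * p)))
    (hA : ∀ i, (A i).card = 3)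
    (y : Fin (n + 1) → EuclideanSpace ℝ (Fin (3 * p)))
    (hchar : ∀ (i : Fin n) (j : Fin (3 * p)), y i.castSucc j = if j ∈ A i then 1 else 0)
    (hlast : ∀ j, y (Fin.last n) j = -1)
    (C : Finset (Fin (n + 1))) (hCne : C.Nonempty)
    (hsum : (∑ i ∈ C, y i) = 0) :
    Fin.last n ∈ C ∧
      (Finset.univ.filter (fun i : Fin n => i.castSucc ∈ C)).card = p ∧
      (∀ i ∈ Finset.univ.filter (fun i : Fin n => i.castSucc ∈ C),
        ∀ i' ∈ Finset.univ.filter (fun i : Fin n => i.castSucc ∈ C),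
          i ≠ i' → Disjoint (A i) (A i')) ∧
      (Finset.univ.filter (fun i : Fin n => i.castSucc ∈ C)).biUnion A = Finset.univ := by
  set S := univ.filter (fun i : Fin n => i.castSucc ∈ C)
  have hcount (j : Fin (3 * p)) :
      ((S.filter (fun i => j ∈ A i)).card : ℝ) = if Fin.last n ∈ C then 1 else 0 := by
    have h := congrArg (· j) (Fin.sum_finset_eq_sum_castSucc_add C y ▸ hsum)
    simp only [PiLp.add_apply, WithLp.ofLp_sum, Finset.sum_apply, hchar, sum_boole,
      apply_ite (fun v : EuclideanSpace ℝ (Fin (3 * p)) => v j), hlast, PiLp.zero_apply] at h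
    split_ifs at h ⊢ <;> linarith
  have hlastC : Fin.last n ∈ C := by
    by_contra h
    obtain ⟨a, ha⟩ := hCne
    obtain ⟨i, rfl⟩ := Fin.exists_castSucc_eq.2 (ne_of_mem_of_not_mem ha h)
    obtain ⟨j, hj⟩ : (A i).Nonempty := card_pos.1 (by rw [hA i]; norm_num)
    have hempty : (S.filter (fun i => j ∈ A i)).card = 0 := by
      exact_mod_cast (hcount j).trans (if_neg h)
    exact card_ne_zero_of_mem (mem_filter.2 ⟨mem_filter.2 ⟨mem_univ i, ha⟩, hj⟩) hempty
  have hone (j : Fin (3 * p)) : (S.filter (fun i => j ∈ A i)).card = 1 := by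
    exact_mod_cast (hcount j).trans (if_pos hlastC)
  obtain ⟨hdisj, hcover⟩ := exact_cover_of_card_filter_mem_eq_one hone
  refine ⟨hlastC, ?_, hdisj, hcover⟩
  have hcard := card_biUnion hdisj
  rw [hcover, card_univ, Fintype.card_fin, sum_congr rfl fun i _ => hA i, sum_const,
    smul_eq_mul] at hcard
  omega
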